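/- arXiv:2303.15045 — 5 statements merged into one kernel-verified Lean document; each statement's English description precedes it below -/
import Mathlib

section
/- Let m and n be natural numbers, and regard Fin m and Fin n with their linear orders as structures for the first-order language with a single binary relation symbol (Mathlib's Language.order). If there exists an elementary embedding from the structure Fin m into the structure Fin n, then m = n. -/
open FirstOrder

attribute [local instance] FirstOrder.Language.orderStructure

/-- If there is an elementary embedding (for the language with a single binary
relation symbol, interpreted as the linear order) from `Fin m` into `Fin n`,
then `m = n`. -/
theorem eq_of_elementaryEmbedding_fin (m n : ℕ)
    (h : Nonempty (Fin m ↪ₑ[Language.order] Fin n)) : m = n := by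
  obtain ⟨f⟩ := h
  have h1 := (f.map_sentence (Language.Sentence.cardGe Language.order m)).mp
    ((Language.Sentence.realize_cardGe _ m).mpr (by simp))
  have h2 := (f.map_sentence (Language.Sentence.cardGe Language.order n)).mpr
    ((Language.Sentence.realize_cardGe _ n).mpr (by simp))
  rw [Language.Sentence.realize_cardGe] at h1 h2
  simp only [Cardinal.mk_fin, Nat.cast_le] at h1 h2
  omega
end

section
/- Let m and n be natural numbers and let f be an elementary embedding from Fin m into Fin n, where Fin m and Fin n carry their linear orders as structures for the first-order language with a single binary relation symbol (Mathlib's Language.order). Then f is the canonical inclusion: for every i : Fin m, the value f i, viewed as a natural number, equals i (viewed as a natural number). -/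
/-!
Being the least element and being an immediate successor are both expressible by first-order
formulas in the language of orders, so an elementary embedding preserves them. Hence `f` sends
`0` to the least element of `Fin n` and the successor of `i` to the successor of `f i`, and
induction on `i` gives `f i = i`.
-/

open FirstOrder

attribute [local instance] FirstOrder.Language.orderStructure

namespace FirstOrder.Language

instance (M : Type*) [LE M] : Language.order.OrderedStructure M :=
  ⟨fun _ => Iff.rfl⟩

open BoundedFormula

variable (L : Language) [L.IsOrdered]

def minFormula : L.Formula (Fin 1) :=
  ∼(∃' (&0).lt (var (Sum.inl 0)))

def covByFormula : L.Formula (Fin 2) :=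
  (var (Sum.inl 0)).lt (var (Sum.inl 1)) ⊓
    ∼(∃' ((var (Sum.inl 0)).lt &0 ⊓ (&0).lt (var (Sum.inl 1))))

variable {L} {M : Type*} [L.Structure M] [Preorder M] [L.OrderedStructure M]

@[simp]
theorem realize_minFormula (x : Fin 1 → M) : L.minFormula.Realize x ↔ IsMin (x 0) := by
  simp [minFormula, Formula.Realize, Term.realize_lt, Fin.snoc, isMin_iff_forall_not_lt]

@[simp]
theorem realize_covByFormula (x : Fin 2 → M) : L.covByFormula.Realize x ↔ x 0 ⋖ x 1 := by
  simp [covByFormula, Formula.Realize, Term.realize_lt, Fin.snoc, CovBy]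

namespace ElementaryEmbedding

variable {N : Type*} [L.Structure N] [Preorder N] [L.OrderedStructure N] (f : M ↪ₑ[L] N)

theorem isMin_iff {x : M} : IsMin (f x) ↔ IsMin x := by
  have h := f.map_formula L.minFormula ![x]
  simp only [realize_minFormula, Function.comp_apply, Matrix.cons_val_fin_one] at h
  exact h

theorem covBy_iff {x y : M} : f x ⋖ f y ↔ x ⋖ y := by
  have h := f.map_formula L.covByFormula ![x, y]
  simp only [realize_covByFormula, Function.comp_apply, Matrix.cons_val_zero,
    Matrix.cons_val_one] at h
  exact h

end ElementaryEmbedding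

end FirstOrder.Language

theorem Fin.isMin_iff_val_eq_zero {n : ℕ} {a : Fin n} : IsMin a ↔ (a : ℕ) = 0 := by
  refine ⟨fun h => ?_, fun h b _ => Fin.le_def.2 (h ▸ Nat.zero_le b)⟩
  by_contra h0
  exact h.not_lt (show (⟨0, a.pos⟩ : Fin n) < a from Nat.pos_of_ne_zero h0)

theorem Fin.val_apply_eq_of_isMin_of_covBy {m n : ℕ} {g : Fin m → Fin n}
    (hmin : ∀ i, IsMin i → IsMin (g i)) (hcov : ∀ i j, i ⋖ j → g i ⋖ g j) (i : Fin m) :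
    (g i : ℕ) = i := by
  obtain ⟨k, hk⟩ := i
  induction k with
  | zero => exact Fin.isMin_iff_val_eq_zero.1 (hmin _ (Fin.isMin_iff_val_eq_zero.2 rfl))
  | succ k ih =>
    have hk' : k < m := by omega
    have := hcov ⟨k, hk'⟩ ⟨k + 1, hk⟩ (Fin.covBy_iff.2 (Nat.covBy_iff_add_one_eq.2 rfl))
    rw [Fin.covBy_iff, Nat.covBy_iff_add_one_eq, ih hk'] at this
    exact this.symm

/-- An elementary embedding (for the language with a single binary relation symbol,
interpreted as the linear order) from `Fin m` into `Fin n` is the canonical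
inclusion: `f i`, viewed as a natural number, equals `i`. -/
theorem elementaryEmbedding_fin_eq_id (m n : ℕ)
    (f : Fin m ↪ₑ[Language.order] Fin n) :
    ∀ i : Fin m, ((f i : Fin n) : ℕ) = (i : ℕ) :=
  Fin.val_apply_eq_of_isMin_of_covBy (fun _ => f.isMin_iff.2) (fun _ _ => f.covBy_iff.2)
end

section
/- Let e : ZFSet ≃ ZFSet be a permutation of the universe of ZFC sets that fixes every finite set, i.e., e s = s whenever s.toSet is finite. Then π-ordered-pairs are absolute: for all x y : ZFSet, e.symm {e.symm {x}, e.symm {x, y}} = ZFSet.pair x y, i.e., the interpretation of the Kuratowski ordered pair of x and y in the permuted model (V, ∈_π), where u ∈_π v iff u ∈ e v, equals the standard Kuratowski pair {{x},{x,y}}. -/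
/-- **Lemma 3.4(i)**: If a permutation `e` of the universe of ZFC sets fixes every
finite set, then π-ordered-pairs are absolute: the interpretation of the Kuratowski
pair of `x` and `y` in the permuted model `(V, ∈_π)` (where `u ∈_π v ↔ u ∈ e v`)
equals the standard Kuratowski pair `{{x}, {x, y}}`. -/
theorem pi_pair_absolute (e : ZFSet ≃ ZFSet)
    (he : ∀ s : ZFSet, s.toSet.Finite → e s = s) :
    ∀ x y : ZFSet, e.symm {e.symm {x}, e.symm {x, y}} = ZFSet.pair x y := by
  have symm_fix {s : ZFSet} (hs : (s : Set ZFSet).Finite) : e.symm s = s :=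
    e.symm_apply_eq.2 (he s hs).symm
  intro x y
  rw [symm_fix (s := {x}) (by simp), symm_fix (s := {x, y}) (by simp), symm_fix (by simp)]
  rfl
end

section
/- Let e : ZFSet ≃ ZFSet be a permutation of the universe of ZFC sets that fixes every finite set, i.e., e s = s whenever s.toSet is finite. Then for all Q M N : ZFSet, the π-translation of 'Q is a binary relation between M and N' holds if and only if e Q ⊆ (e M).prod (e N); explicitly: (for every z ∈ e Q there exist x ∈ e M and y ∈ e N with z = e.symm {e.symm {x}, e.symm {x, y}}) if and only if e Q is a subset of the Cartesian product ZFSet.prod (e M) (e N). -/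
namespace ZFSet

theorem toSet_finite_insert (x : ZFSet) {s : ZFSet} (hs : s.toSet.Finite) :
    (insert x s).toSet.Finite := by
  convert hs.insert x
  exact coe_insert x s

theorem toSet_finite_singleton (x : ZFSet) : ({x} : ZFSet).toSet.Finite := by
  convert Set.finite_singleton x
  exact coe_singleton x

/-- The Kuratowski pair `{{x}, {x, y}}` read in the permuted membership `u ∈_π v ↔ u ∈ e v`. -/
def permPair (e : ZFSet ≃ ZFSet) (x y : ZFSet) : ZFSet :=
  e.symm {e.symm {x}, e.symm {x, y}}

theorem permPair_eq_pair {e : ZFSet ≃ ZFSet} (he : ∀ s : ZFSet, s.toSet.Finite → e s = s)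
    (x y : ZFSet) : permPair e x y = pair x y := by
  have he_symm (s : ZFSet) (hs : s.toSet.Finite) : e.symm s = s := e.symm_apply_eq.2 (he s hs).symm
  have finite_pair (u v : ZFSet) : ({u, v} : ZFSet).toSet.Finite :=
    toSet_finite_insert u (toSet_finite_singleton v)
  rw [permPair, he_symm _ (toSet_finite_singleton x), he_symm _ (finite_pair x y),
    he_symm _ (finite_pair _ _), pair]

end ZFSet

/-- **Lemma 3.4(ii)**: If a permutation `e` of the universe of ZFC sets fixes every
finite set, then the π-translation of "`Q` is a binary relation between `M` and `N`"
holds iff `e Q ⊆ (e M) × (e N)`. -/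
theorem pi_binary_relation_absolute (e : ZFSet ≃ ZFSet)
    (he : ∀ s : ZFSet, s.toSet.Finite → e s = s) :
    ∀ Q M N : ZFSet,
      (∀ z ∈ e Q, ∃ x ∈ e M, ∃ y ∈ e N, z = e.symm {e.symm {x}, e.symm {x, y}}) ↔
        e Q ⊆ ZFSet.prod (e M) (e N) := by
  intro Q M N
  have hpair : ∀ x y, e.symm {e.symm {x}, e.symm {x, y}} = ZFSet.pair x y :=
    ZFSet.permPair_eq_pair he
  simp_rw [hpair, ← ZFSet.mem_prod]
  rfl
end

section
/- There exists a permutation e : ZFSet ≃ ZFSet of the universe of ZFC sets such that: (1) e fixes every finite set (e s = s whenever s.toSet is finite); (2) e fixes ω (e ZFSet.omega = ZFSet.omega); and (3) there exists X : ZFSet with X ∈ e X, so that the permuted membership relation x ∈_π y :↔ x ∈ e y admits a set that is a π-member of itself, i.e., Foundation fails for ∈_π. -/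
private noncomputable def vnNat : ℕ → ZFSet
  | 0 => ∅
  | n + 1 => insert (vnNat n) (vnNat n)

private theorem vnNat_mem_omega : ∀ n, vnNat n ∈ ZFSet.omega
  | 0 => ZFSet.omega_zero
  | n + 1 => ZFSet.omega_succ (vnNat_mem_omega n)

private theorem vnNat_injective : Function.Injective vnNat := by
  have hmono : StrictMono (fun n => (vnNat n).rank) := by
    apply strictMono_nat_of_lt_succ
    intro n
    exact ZFSet.rank_lt_of_mem (ZFSet.mem_insert _ _)
  intro a b h
  exact hmono.injective (by rw [h])

private theorem omega_toSet_infinite : ZFSet.omega.toSet.Infinite :=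
  Set.infinite_of_injective_forall_mem (f := vnNat) vnNat_injective vnNat_mem_omega

/-- **Theorem 3.2 (construction)**: There is a permutation `e` of the universe of ZFC
sets fixing every finite set and fixing `ω`, such that some set `X` satisfies
`X ∈ e X`, i.e. `X ∈_π X` for the permuted membership relation, so Foundation fails
for `∈_π`. -/
theorem exists_permutation_foundation_fails :
    ∃ e : ZFSet ≃ ZFSet,
      (∀ s : ZFSet, s.toSet.Finite → e s = s) ∧
      e ZFSet.omega = ZFSet.omega ∧
      ∃ X : ZFSet, X ∈ e X := by
  classical
  set X : ZFSet := insert ZFSet.omega ZFSet.omega with hX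
  set Y : ZFSet := insert X ZFSet.omega with hY
  have homemX : ZFSet.omega ∈ X := ZFSet.mem_insert _ _
  have hXmemY : X ∈ Y := ZFSet.mem_insert _ _
  have hXne : X ≠ ZFSet.omega := fun h => ZFSet.mem_irrefl _ (h ▸ homemX)
  have hYne : Y ≠ ZFSet.omega := fun h => ZFSet.mem_asymm homemX (h ▸ hXmemY)
  have hXY : X ≠ Y := by
    intro h
    have : ZFSet.omega ∈ Y := h ▸ homemX
    rcases ZFSet.mem_insert_iff.1 this with h' | h'
    · exact hXne h'.symm
    · exact ZFSet.mem_irrefl _ h'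
  have hXinf : X.toSet.Infinite := by
    apply omega_toSet_infinite.mono
    intro z hz
    exact ZFSet.mem_insert_of_mem _ hz
  have hYinf : Y.toSet.Infinite := by
    apply omega_toSet_infinite.mono
    intro z hz
    exact ZFSet.mem_insert_of_mem _ hz
  refine ⟨Equiv.swap X Y, fun s hs => ?_, ?_, X, ?_⟩
  · apply Equiv.swap_apply_of_ne_of_ne
    · rintro rfl; exact hXinf hs
    · rintro rfl; exact hYinf hs
  · exact Equiv.swap_apply_of_ne_of_ne (Ne.symm hXne) (Ne.symm hYne)
  · rw [Equiv.swap_apply_left]; exact hXmemY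
end
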